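/- Let Ã, Ã' ∈ ℂ^{4n×4n} satisfy the structural symmetries Ã = −KΣÃ†ΣK and Ã' = −KΣÃ'†ΣK, let T ∈ ℂ^{4n×4n} be invertible with Ã' = TÃT⁻¹, and let C̃, C̃' ∈ ℂ^{2m×4n} satisfy C̃' = C̃T⁻¹ and C̃ = C̃·KΣT†ΣKT. Then for every integer k ≥ 0, C̃Ã^k = C̃Ã^k · KΣT†ΣKT. -/

import Mathlib

open Matrix

noncomputable section

/-- The canonical equivalence `Fin n ⊕ Fin n ≃ Fin (2*n)`. -/
def dEquiv (n : ℕ) : Fin n ⊕ Fin n ≃ Fin (2*n) :=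
  finSumFinEquiv.trans (finCongr (two_mul n).symm)

/-- The matrix `J_n = diag(1_n, -1_n)`. -/
def Jmat (n : ℕ) : Matrix (Fin (2*n)) (Fin (2*n)) ℂ :=
  Matrix.reindex (dEquiv n) (dEquiv n) (Matrix.fromBlocks 1 0 0 (-1))

/-- `Z♭ := J_b Zᴴ J_a` for `Z : ℂ^{2a × 2b}`. -/
def flat {a b : ℕ} (Z : Matrix (Fin (2*a)) (Fin (2*b)) ℂ) :
    Matrix (Fin (2*b)) (Fin (2*a)) ℂ :=
  Jmat b * Zᴴ * Jmat a

/-- A matrix is doubled-up if it has the block form `[X₋, X₊; conj X₊, conj X₋]`. -/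
def DoubledUp {a b : ℕ} (X : Matrix (Fin (2*a)) (Fin (2*b)) ℂ) : Prop :=
  ∃ Xm Xp : Matrix (Fin a) (Fin b) ℂ,
    X = Matrix.reindex (dEquiv a) (dEquiv b)
      (Matrix.fromBlocks Xm Xp (Xp.map (starRingEnd ℂ)) (Xm.map (starRingEnd ℂ)))

/-- `S` is ♭-unitary if `S♭S = SS♭ = 1`. -/
def FlatUnitary {m : ℕ} (S : Matrix (Fin (2*m)) (Fin (2*m)) ℂ) : Prop :=
  flat S * S = 1 ∧ S * flat S = 1

/-- `S` is symplectic if it is ♭-unitary and doubled-up. -/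
def Symplectic {m : ℕ} (S : Matrix (Fin (2*m)) (Fin (2*m)) ℂ) : Prop :=
  DoubledUp S ∧ FlatUnitary S

/-- The vacuum covariance matrix `V_vac = [1_m, 0; 0, 0]`. -/
def Vvac (m : ℕ) : Matrix (Fin (2*m)) (Fin (2*m)) ℂ :=
  Matrix.reindex (dEquiv m) (dEquiv m) (Matrix.fromBlocks 1 0 0 0)

/-- A quantum linear system: doubled-up matrices satisfying physical realisability. -/
def IsQLS {n m : ℕ} (A : Matrix (Fin (2*n)) (Fin (2*n)) ℂ)
    (C : Matrix (Fin (2*m)) (Fin (2*n)) ℂ) : Prop :=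
  DoubledUp A ∧ DoubledUp C ∧ A + flat A + flat C * C = 0

/-- The transfer function `Ξ(s) = 1 - C (s - A)⁻¹ C♭`. -/
def transferFn {n m : ℕ} (A : Matrix (Fin (2*n)) (Fin (2*n)) ℂ)
    (C : Matrix (Fin (2*m)) (Fin (2*n)) ℂ) (s : ℂ) :
    Matrix (Fin (2*m)) (Fin (2*m)) ℂ :=
  1 - C * (s • (1 : Matrix (Fin (2*n)) (Fin (2*n)) ℂ) - A)⁻¹ * flat C

/-- The power spectrum with vacuum input: `Ψ(s) = Ξ(s) V_vac Ξ(-s̄)ᴴ`. -/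
def powerSpectrum {n m : ℕ} (A : Matrix (Fin (2*n)) (Fin (2*n)) ℂ)
    (C : Matrix (Fin (2*m)) (Fin (2*n)) ℂ) (s : ℂ) :
    Matrix (Fin (2*m)) (Fin (2*m)) ℂ :=
  transferFn A C s * Vvac m * (transferFn A C (-(starRingEnd ℂ s)))ᴴ

/-- The set of points at which the power spectrum is defined. -/
def psDefined {n : ℕ} (A : Matrix (Fin (2*n)) (Fin (2*n)) ℂ) (s : ℂ) : Prop :=
  s ∉ spectrum ℂ A ∧ (-(starRingEnd ℂ s)) ∉ spectrum ℂ A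

/-- Hurwitz stability: all eigenvalues have strictly negative real part. -/
def Hurwitz {I : Type*} [Fintype I] [DecidableEq I] (A : Matrix I I ℂ) : Prop :=
  ∀ lam ∈ spectrum ℂ A, lam.re < 0

/-- The controllability matrix `[B, AB, …, A^{N-1}B]` (columns indexed by pairs). -/
def ctrbMat {I J : Type*} [Fintype I] [DecidableEq I] [Fintype J]
    (A : Matrix I I ℂ) (B : Matrix I J ℂ) :
    Matrix I (Fin (Fintype.card I) × J) ℂ :=
  Matrix.of fun i p => (A ^ (p.1 : ℕ) * B) i p.2

/-- `(A, B)` is controllable if the controllability matrix has full rank. -/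
def Controllable {I J : Type*} [Fintype I] [DecidableEq I] [Fintype J] [DecidableEq J]
    (A : Matrix I I ℂ) (B : Matrix I J ℂ) : Prop :=
  (ctrbMat A B).rank = Fintype.card I

/-- The observability matrix `[C; CA; …; CA^{N-1}]` (rows indexed by pairs). -/
def obsMat {I J : Type*} [Fintype I] [DecidableEq I] [Fintype J]
    (C : Matrix J I ℂ) (A : Matrix I I ℂ) :
    Matrix (Fin (Fintype.card I) × J) I ℂ :=
  Matrix.of fun p j => (C * A ^ (p.1 : ℕ)) p.2 j

/-- `(C, A)` is observable if the observability matrix has full rank. -/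
def Observable {I J : Type*} [Fintype I] [DecidableEq I] [Fintype J]
    (C : Matrix J I ℂ) (A : Matrix I I ℂ) : Prop :=
  (obsMat C A).rank = Fintype.card I

/-- Minimality of a QLS `(A, C)`, with input matrix `B = -C♭`. -/
def MinimalQLS {n m : ℕ} (A : Matrix (Fin (2*n)) (Fin (2*n)) ℂ)
    (C : Matrix (Fin (2*m)) (Fin (2*n)) ℂ) : Prop :=
  Controllable A (-(flat C)) ∧ Observable C A

/-- Global minimality for vacuum input: no strictly smaller QLS has the same
power spectrum wherever both are defined. -/
def GloballyMinimal {n m : ℕ} (A : Matrix (Fin (2*n)) (Fin (2*n)) ℂ)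
    (C : Matrix (Fin (2*m)) (Fin (2*n)) ℂ) : Prop :=
  ¬ ∃ n' : ℕ, n' < n ∧ ∃ (A' : Matrix (Fin (2*n')) (Fin (2*n')) ℂ)
      (C' : Matrix (Fin (2*m)) (Fin (2*n')) ℂ), IsQLS A' C' ∧
      ∀ s : ℂ, psDefined A s → psDefined A' s →
        powerSpectrum A C s = powerSpectrum A' C' s

/-- The `Ã` matrix of the cascade realisation of the power spectrum. -/
def cascadeA {n m : ℕ} (A : Matrix (Fin (2*n)) (Fin (2*n)) ℂ)
    (C : Matrix (Fin (2*m)) (Fin (2*n)) ℂ) :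
    Matrix (Fin (2*n) ⊕ Fin (2*n)) (Fin (2*n) ⊕ Fin (2*n)) ℂ :=
  Matrix.fromBlocks (-(flat A)) 0 (flat C * Vvac m * C) A

/-- The `B̃` matrix of the cascade realisation. -/
def cascadeB {n m : ℕ} (A : Matrix (Fin (2*n)) (Fin (2*n)) ℂ)
    (C : Matrix (Fin (2*m)) (Fin (2*n)) ℂ) :
    Matrix (Fin (2*n) ⊕ Fin (2*n)) (Fin (2*m)) ℂ :=
  Matrix.fromRows (-(flat C)) (-(flat C * Vvac m))

/-- The `C̃` matrix of the cascade realisation. -/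
def cascadeC {n m : ℕ} (A : Matrix (Fin (2*n)) (Fin (2*n)) ℂ)
    (C : Matrix (Fin (2*m)) (Fin (2*n)) ℂ) :
    Matrix (Fin (2*m)) (Fin (2*n) ⊕ Fin (2*n)) ℂ :=
  Matrix.fromCols (-(Vvac m * C)) C

/-- `K := [J_n, 0; 0, -J_n]`. -/
def Kmat (n : ℕ) : Matrix (Fin (2*n) ⊕ Fin (2*n)) (Fin (2*n) ⊕ Fin (2*n)) ℂ :=
  Matrix.fromBlocks (Jmat n) 0 0 (-(Jmat n))

/-- `Σ := [0, 1; 1, 0]` (on the doubled index). -/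
def SigmaBig (n : ℕ) : Matrix (Fin (2*n) ⊕ Fin (2*n)) (Fin (2*n) ⊕ Fin (2*n)) ℂ :=
  Matrix.fromBlocks 0 1 1 0


lemma Jsq (n : ℕ) : Jmat n * Jmat n = 1 := by
  unfold Jmat
  rw [Matrix.reindex_apply, Matrix.submatrix_mul_equiv, Matrix.fromBlocks_multiply]
  simp [Matrix.submatrix_one_equiv]

lemma Ksq (n : ℕ) : Kmat n * Kmat n = 1 := by
  unfold Kmat
  rw [Matrix.fromBlocks_multiply]
  simp [Jsq]

lemma Ssq (n : ℕ) : SigmaBig n * SigmaBig n = 1 := by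
  unfold SigmaBig
  rw [Matrix.fromBlocks_multiply]
  simp

lemma ring_comm_aux {R : Type*} [Ring R] (a a' b b' t u k s : R)
    (hMN : k * s * (s * k) = 1) (hNM : s * k * (k * s) = 1)
    (hA : a = -(k * s * b * s * k)) (hA' : a' = -(k * s * b' * s * k))
    (hTA : t * a = a' * t) (hstar : u * b' = b * u) :
    (k * s * u * s * k * t) * a = a * (k * s * u * s * k * t) := by
  have h1 : a * (k * s) = -(k * s * b) := by
    calc a * (k * s) = -(k * s * b * (s * k * (k * s))) := by rw [hA]; noncomm_ring
      _ = -(k * s * b) := by rw [hNM, mul_one]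
  have h2 : s * k * a' = -(b' * (s * k)) := by
    calc s * k * a' = -((s * k * (k * s)) * b' * (s * k)) := by rw [hA']; noncomm_ring
      _ = -(b' * (s * k)) := by rw [hNM]; noncomm_ring
  calc (k * s * u * s * k * t) * a
      = k * s * u * (s * k * a') * t := by
        rw [show k * s * u * (s * k * a') * t = k * s * u * (s * k) * (a' * t) by
          noncomm_ring, ← hTA]; noncomm_ring
    _ = -(k * s * (u * b') * (s * k) * t) := by rw [h2]; noncomm_ring
    _ = -(k * s * b) * (u * s * k * t) := by rw [hstar]; noncomm_ring
    _ = a * (k * s) * (u * s * k * t) := by rw [← h1]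
    _ = a * (k * s * u * s * k * t) := by noncomm_ring

/-- Claim 1 in Appendix B: propagation of the relation
`C̃Ã^k = C̃Ã^k KΣT†ΣKT` to all powers `k`. -/
theorem obs_rows_invariance {n m : ℕ}
    (Atil Atil' T : Matrix (Fin (2*n) ⊕ Fin (2*n)) (Fin (2*n) ⊕ Fin (2*n)) ℂ)
    (Ctil Ctil' : Matrix (Fin (2*m)) (Fin (2*n) ⊕ Fin (2*n)) ℂ)
    (hA : Atil = -(Kmat n * SigmaBig n * Atilᴴ * SigmaBig n * Kmat n))
    (hA' : Atil' = -(Kmat n * SigmaBig n * Atil'ᴴ * SigmaBig n * Kmat n))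
    (hT : IsUnit T) (hsim : Atil' = T * Atil * T⁻¹)
    (hC' : Ctil' = Ctil * T⁻¹)
    (hC : Ctil = Ctil * (Kmat n * SigmaBig n * Tᴴ * SigmaBig n * Kmat n * T)) :
    ∀ k : ℕ, Ctil * Atil ^ k =
      Ctil * Atil ^ k * (Kmat n * SigmaBig n * Tᴴ * SigmaBig n * Kmat n * T) := by
  have hMN : Kmat n * SigmaBig n * (SigmaBig n * Kmat n) = 1 := by
    rw [show Kmat n * SigmaBig n * (SigmaBig n * Kmat n)
      = Kmat n * (SigmaBig n * SigmaBig n) * Kmat n by noncomm_ring, Ssq, mul_one, Ksq]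
  have hNM : SigmaBig n * Kmat n * (Kmat n * SigmaBig n) = 1 := by
    rw [show SigmaBig n * Kmat n * (Kmat n * SigmaBig n)
      = SigmaBig n * (Kmat n * Kmat n) * SigmaBig n by noncomm_ring, Ksq, mul_one, Ssq]
  have hTA : T * Atil = Atil' * T := by
    rw [hsim, Matrix.mul_assoc, Matrix.mul_assoc, Matrix.nonsing_inv_mul _
      ((Matrix.isUnit_iff_isUnit_det T).mp hT), Matrix.mul_one]
  have hstar : Tᴴ * Atil'ᴴ = Atilᴴ * Tᴴ := by
    rw [← Matrix.conjTranspose_mul, ← hTA, Matrix.conjTranspose_mul]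
  have hcomm := ring_comm_aux Atil Atil' Atilᴴ Atil'ᴴ T Tᴴ (Kmat n) (SigmaBig n)
    hMN hNM hA hA' hTA hstar
  intro k
  induction k with
  | zero => simpa using hC
  | succ k ih =>
    have h1 : Ctil * Atil ^ (k + 1) =
        Ctil * Atil ^ k * (Kmat n * SigmaBig n * Tᴴ * SigmaBig n * Kmat n * T) * Atil := by
      rw [pow_succ, ← Matrix.mul_assoc, ← ih]
    calc Ctil * Atil ^ (k + 1)
        = Ctil * Atil ^ k * (Kmat n * SigmaBig n * Tᴴ * SigmaBig n * Kmat n * T) * Atil := h1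
      _ = Ctil * Atil ^ k *
            (Atil * (Kmat n * SigmaBig n * Tᴴ * SigmaBig n * Kmat n * T)) := by
          rw [Matrix.mul_assoc, hcomm]
      _ = Ctil * Atil ^ (k + 1) * (Kmat n * SigmaBig n * Tᴴ * SigmaBig n * Kmat n * T) := by
          rw [← Matrix.mul_assoc, Matrix.mul_assoc Ctil (Atil ^ k) Atil, ← pow_succ]

end
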